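/- arXiv:1501.06937 — 3 statements merged into one kernel-verified Lean document; each statement's English description precedes it below -/
import Mathlib

section
/- The permutation g = (1,2,...,m)(m+1,m+2,m+3,m+4)(m+5,m+6) on the vertex set {1,...,m+6} is a graph automorphism of Γ_m. -/
/-- One-directional edge description of the graph `Γ_m`, on labels `1,…,m+6`. -/
def rel0 (m a b : ℕ) : Prop :=
  (1 ≤ a ∧ a ≤ m - 1 ∧ b = a + 1) ∨ (a = 1 ∧ b = m) ∨
  (a = m+1 ∧ 1 ≤ b ∧ b ≤ m ∧ (b % 4 = 1 ∨ b % 4 = 2)) ∨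
  (a = m+2 ∧ 1 ≤ b ∧ b ≤ m ∧ (b % 4 = 2 ∨ b % 4 = 3)) ∨
  (a = m+3 ∧ 1 ≤ b ∧ b ≤ m ∧ (b % 4 = 3 ∨ b % 4 = 0)) ∨
  (a = m+4 ∧ 1 ≤ b ∧ b ≤ m ∧ (b % 4 = 0 ∨ b % 4 = 1)) ∨
  (a = m+5 ∧ 1 ≤ b ∧ b ≤ m ∧ b % 2 = 1) ∨
  (a = m+6 ∧ 1 ≤ b ∧ b ≤ m ∧ b % 2 = 0) ∨
  (a = m+1 ∧ b = m+5) ∨ (a = m+3 ∧ b = m+5) ∨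
  (a = m+2 ∧ b = m+6) ∨ (a = m+4 ∧ b = m+6)

instance (m a b : ℕ) : Decidable (rel0 m a b) := by unfold rel0; infer_instance

/-- The graph `Γ_m` on vertex set `{1,…,m+6}`, encoded on `Fin (m+6)`
    where the vertex `v : Fin (m+6)` carries the label `v.val + 1`. -/
def Gamma (m : ℕ) : SimpleGraph (Fin (m+6)) where
  Adj a b := a ≠ b ∧ (rel0 m (a.val+1) (b.val+1) ∨ rel0 m (b.val+1) (a.val+1))
  symm := ⟨by intro a b h; exact ⟨fun e => h.1 e.symm, h.2.symm⟩⟩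
  loopless := ⟨by intro a h; exact h.1 rfl⟩

instance (m : ℕ) : DecidableRel (Gamma m).Adj := fun a b =>
  inferInstanceAs (Decidable (a ≠ b ∧ _))

/-- The permutation `g = (1,2,…,m)(m+1,m+2,m+3,m+4)(m+5,m+6)` on labels,
    written on `Fin (m+6)` (label = index + 1). -/
def gFun (m : ℕ) (v : Fin (m+6)) : Fin (m+6) :=
  if h : v.val < m then ⟨(v.val + 1) % m, lt_of_lt_of_le (Nat.mod_lt _ (by omega)) (by omega)⟩
  else if h2 : v.val < m + 3 then ⟨v.val + 1, by omega⟩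
  else if h3 : v.val = m + 3 then ⟨m, by omega⟩
  else if h4 : v.val = m + 4 then ⟨m + 5, by omega⟩
  else ⟨m + 4, by omega⟩


/-!
The permutation `g` rotates the cycle `1 → 2 → ⋯ → m → 1`, so it shifts every residue
class modulo 4 to the next one, also across the wrap-around `m ↦ 1` because `m ≡ 0 (mod 4)`.
Hence the cycle neighbourhoods of the hubs `m+1, …, m+4` (pairs of consecutive residues)
are permuted cyclically, those of `m+5, m+6` (the two parity classes) are swapped, and the
four hub-to-hub edges are permuted among themselves. So `g` sends each of the twelve clauses
of `rel0` to a clause of `rel0`, read in one direction or the other, and likewise for `g⁻¹`.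
-/

section Rel0Intro

variable {m a b : ℕ}

lemma rel0_cycle_succ (h : 1 ≤ a ∧ a ≤ m - 1 ∧ b = a + 1) : rel0 m a b := .inl h
lemma rel0_cycle_close (h : a = 1 ∧ b = m) : rel0 m a b := .inr <| .inl h
lemma rel0_hub₁ (h : a = m+1 ∧ 1 ≤ b ∧ b ≤ m ∧ (b % 4 = 1 ∨ b % 4 = 2)) : rel0 m a b :=
  .inr <| .inr <| .inl h
lemma rel0_hub₂ (h : a = m+2 ∧ 1 ≤ b ∧ b ≤ m ∧ (b % 4 = 2 ∨ b % 4 = 3)) : rel0 m a b :=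
  .inr <| .inr <| .inr <| .inl h
lemma rel0_hub₃ (h : a = m+3 ∧ 1 ≤ b ∧ b ≤ m ∧ (b % 4 = 3 ∨ b % 4 = 0)) : rel0 m a b :=
  .inr <| .inr <| .inr <| .inr <| .inl h
lemma rel0_hub₄ (h : a = m+4 ∧ 1 ≤ b ∧ b ≤ m ∧ (b % 4 = 0 ∨ b % 4 = 1)) : rel0 m a b :=
  .inr <| .inr <| .inr <| .inr <| .inr <| .inl h
lemma rel0_hub₅ (h : a = m+5 ∧ 1 ≤ b ∧ b ≤ m ∧ b % 2 = 1) : rel0 m a b :=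
  .inr <| .inr <| .inr <| .inr <| .inr <| .inr <| .inl h
lemma rel0_hub₆ (h : a = m+6 ∧ 1 ≤ b ∧ b ≤ m ∧ b % 2 = 0) : rel0 m a b :=
  .inr <| .inr <| .inr <| .inr <| .inr <| .inr <| .inr <| .inl h
lemma rel0_hub₁₅ (h : a = m+1 ∧ b = m+5) : rel0 m a b :=
  .inr <| .inr <| .inr <| .inr <| .inr <| .inr <| .inr <| .inr <| .inl h
lemma rel0_hub₃₅ (h : a = m+3 ∧ b = m+5) : rel0 m a b :=
  .inr <| .inr <| .inr <| .inr <| .inr <| .inr <| .inr <| .inr <| .inr <| .inl h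
lemma rel0_hub₂₆ (h : a = m+2 ∧ b = m+6) : rel0 m a b :=
  .inr <| .inr <| .inr <| .inr <| .inr <| .inr <| .inr <| .inr <| .inr <| .inr <| .inl h
lemma rel0_hub₄₆ (h : a = m+4 ∧ b = m+6) : rel0 m a b :=
  .inr <| .inr <| .inr <| .inr <| .inr <| .inr <| .inr <| .inr <| .inr <| .inr <| .inr h

end Rel0Intro

def GMapsTo (m x y : ℕ) : Prop :=
  (1 ≤ x ∧ x < m ∧ y = x + 1) ∨ (x = m ∧ y = 1) ∨
  (m + 1 ≤ x ∧ x ≤ m + 3 ∧ y = x + 1) ∨ (x = m + 4 ∧ y = m + 1) ∨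
  (x = m + 5 ∧ y = m + 6) ∨ (x = m + 6 ∧ y = m + 5)

section GMapsTo

variable {m x y X Y : ℕ}

lemma GMapsTo.left_unique (hm : 0 < m) (hx : GMapsTo m x X) (hy : GMapsTo m y X) : x = y := by
  unfold GMapsTo at hx hy
  omega

lemma rel0_map_of_gMapsTo (h4 : 4 ∣ m) (hm : 0 < m)
    (hx : GMapsTo m x X) (hy : GMapsTo m y Y) (h : rel0 m x y) :
    rel0 m X Y ∨ rel0 m Y X := by
  unfold GMapsTo at hx hy
  rcases h with h | h | h | h | h | h | h | h | h | h | h | h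
  · obtain hy' | hy' := Nat.lt_or_ge y m
    · exact .inl (rel0_cycle_succ (by omega))
    · exact .inr (rel0_cycle_close (by omega))
  · exact .inr (rel0_cycle_succ (by omega))
  · exact .inl (rel0_hub₂ (by omega))
  · exact .inl (rel0_hub₃ (by omega))
  · exact .inl (rel0_hub₄ (by omega))
  · exact .inl (rel0_hub₁ (by omega))
  · exact .inl (rel0_hub₆ (by omega))
  · exact .inl (rel0_hub₅ (by omega))
  · exact .inl (rel0_hub₂₆ (by omega))
  · exact .inl (rel0_hub₄₆ (by omega))
  · exact .inl (rel0_hub₃₅ (by omega))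
  · exact .inl (rel0_hub₁₅ (by omega))

lemma rel0_of_map_gMapsTo (h4 : 4 ∣ m) (hm : 0 < m)
    (hx : GMapsTo m x X) (hy : GMapsTo m y Y) (h : rel0 m X Y) :
    rel0 m x y ∨ rel0 m y x := by
  unfold GMapsTo at hx hy
  rcases h with h | h | h | h | h | h | h | h | h | h | h | h
  · obtain hX | hX := Nat.lt_or_ge X 2
    · exact .inr (rel0_cycle_close (by omega))
    · exact .inl (rel0_cycle_succ (by omega))
  · exact .inr (rel0_cycle_succ (by omega))
  · exact .inl (rel0_hub₄ (by omega))
  · exact .inl (rel0_hub₁ (by omega))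
  · exact .inl (rel0_hub₂ (by omega))
  · exact .inl (rel0_hub₃ (by omega))
  · exact .inl (rel0_hub₆ (by omega))
  · exact .inl (rel0_hub₅ (by omega))
  · exact .inl (rel0_hub₄₆ (by omega))
  · exact .inl (rel0_hub₂₆ (by omega))
  · exact .inl (rel0_hub₁₅ (by omega))
  · exact .inl (rel0_hub₃₅ (by omega))

lemma rel0_symm_iff_of_gMapsTo (h4 : 4 ∣ m) (hm : 0 < m)
    (hx : GMapsTo m x X) (hy : GMapsTo m y Y) :
    (rel0 m X Y ∨ rel0 m Y X) ↔ (rel0 m x y ∨ rel0 m y x) := by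
  constructor
  · rintro (h | h)
    · exact rel0_of_map_gMapsTo h4 hm hx hy h
    · exact (rel0_of_map_gMapsTo h4 hm hy hx h).symm
  · rintro (h | h)
    · exact rel0_map_of_gMapsTo h4 hm hx hy h
    · exact (rel0_map_of_gMapsTo h4 hm hy hx h).symm

end GMapsTo

lemma gMapsTo_gFun {m : ℕ} (hm : 0 < m) (v : Fin (m + 6)) :
    GMapsTo m (v.val + 1) ((gFun m v).val + 1) := by
  unfold gFun GMapsTo
  split_ifs with h₁ h₂ h₃ h₄
  · obtain hlt | heq := (show v.val + 1 ≤ m from h₁).lt_or_eq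
    · simp only [Nat.mod_eq_of_lt hlt, and_true]
      omega
    · simp only [heq, Nat.mod_self, and_true, true_or, or_true]
  all_goals simp only [and_true]
  all_goals omega

lemma gFun_injective {m : ℕ} (hm : 0 < m) : Function.Injective (gFun m) := fun a b h =>
  Fin.ext <| Nat.succ_injective <|
    (gMapsTo_gFun hm a).left_unique hm (h ▸ gMapsTo_gFun hm b)

theorem exists_gamma_iso_gFun {m : ℕ} (h4 : 4 ∣ m) (hm : 0 < m) :
    ∃ φ : Gamma m ≃g Gamma m, ⇑φ = gFun m := by
  have hinj := gFun_injective hm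
  refine ⟨⟨Equiv.ofBijective _ (Finite.injective_iff_bijective.mp hinj), ?_⟩, rfl⟩
  intro a b
  exact and_congr hinj.ne_iff
    (rel0_symm_iff_of_gMapsTo h4 hm (gMapsTo_gFun hm a) (gMapsTo_gFun hm b))

/-- `g = (1,…,m)(m+1,…,m+4)(m+5,m+6)` is an automorphism of `Γ_m`. -/
theorem stmt0 (n m : ℕ) (hn : 2 ≤ n) (hm : m = 2 ^ n) :
    ∃ φ : Gamma m ≃g Gamma m, ⇑φ = gFun m := by
  subst hm
  exact exists_gamma_iso_gFun (pow_dvd_pow 2 hn) (by positivity)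
end

section
/- In the graph Γ_m, the vertices m+5 and m+6 are exactly the vertices of eccentricity 3; all other vertices have eccentricity at most 2. Consequently every automorphism of Γ_m permutes the set {m+5, m+6}. -/
/-- Eccentricity of a vertex: supremum of graph distances to all vertices. -/
noncomputable def ecc (m : ℕ) (v : Fin (m + 6)) : ℕ∞ :=
  ⨆ u : Fin (m + 6), (Gamma m).edist v u

namespace SimpleGraph

variable {V W : Type*} {G : SimpleGraph V} {G' : SimpleGraph W}

theorem edist_le_two_of_adj_of_adj {u v w : V} (huv : G.Adj u v) (hvw : G.Adj v w) :
    G.edist u w ≤ 2 :=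
  (Walk.cons huv (Walk.cons hvw Walk.nil)).edist_le

theorem Hom.edist_le (f : G →g G') (u v : V) : G'.edist (f u) (f v) ≤ G.edist u v := by
  rcases eq_or_ne (G.edist u v) ⊤ with h | h
  · simp [h]
  · obtain ⟨p, hp⟩ := exists_walk_of_edist_ne_top h
    rw [← hp, ← p.length_map f]
    exact (p.map f).edist_le

theorem Iso.edist_eq (f : G ≃g G') (u v : V) : G'.edist (f u) (f v) = G.edist u v :=
  le_antisymm (f.toHom.edist_le u v) (by simpa using f.symm.toHom.edist_le (f u) (f v))

theorem Iso.eccent_eq (f : G ≃g G') (u : V) : G'.eccent (f u) = G.eccent u := by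
  simp only [eccent_def, ← f.toEquiv.iSup_comp]
  exact iSup_congr (f.edist_eq u)

end SimpleGraph

open SimpleGraph

/-- For `k < 4`, vertex `m + k` is the hub joined to the cycle indices `≡ k, k + 1 (mod 4)`;
`m + 4` and `m + 5` are the apexes, joined to the cycle indices of parity `k`. `spoke r k` says
that `m + k` is joined to the cycle indices `≡ r (mod 4)`, and `outerAdj` gives the edges among
`m, …, m + 5`. -/
def spoke (r k : ℕ) : Prop :=
  (k < 4 ∧ (r = k ∨ r = (k + 1) % 4)) ∨ (4 ≤ k ∧ r % 2 = k % 2)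

def outerAdj (k l : ℕ) : Prop :=
  (k < 4 ∧ l = 4 + k % 2) ∨ (l < 4 ∧ k = 4 + l % 2)

instance : DecidableRel spoke := fun _ _ => by unfold spoke; infer_instance

instance : DecidableRel outerAdj := fun _ _ => by unfold outerAdj; infer_instance

theorem exists_spoke_spoke : ∀ r < 4, ∀ s < 4, ∃ k < 6, spoke r k ∧ spoke s k := by
  decide

theorem spoke_or_spoke_succ_or_spoke_pred :
    ∀ r < 4, ∀ k < 6, spoke r k ∨ spoke ((r + 1) % 4) k ∨ spoke ((r + 3) % 4) k := by
  decide

theorem outerAdj_or_common_of_lt_four :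
    ∀ k < 4, ∀ l < 6, k ≠ l → outerAdj k l ∨ (∃ j < 6, outerAdj k j ∧ outerAdj j l) ∨
      ∃ r < 4, spoke r k ∧ spoke r l := by
  decide

theorem eq_of_spoke_of_spoke {r k l : ℕ} (hk : 4 ≤ k) (hl : 4 ≤ l) (hk6 : k < 6) (hl6 : l < 6)
    (h : spoke r k) (h' : spoke r l) : k = l := by
  unfold spoke at h h'; omega

theorem eq_of_outerAdj_of_outerAdj {k j l : ℕ} (hk : 4 ≤ k) (hl : 4 ≤ l)
    (h : outerAdj k j) (h' : outerAdj j l) : k = l := by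
  unfold outerAdj at h h'; omega

theorem not_outerAdj_of_le {k l : ℕ} (hk : 4 ≤ k) (hl : 4 ≤ l) : ¬outerAdj k l := by
  unfold outerAdj; omega

namespace Gamma

variable {m : ℕ}

theorem adj_iff {a b : Fin (m + 6)} :
    (Gamma m).Adj a b ↔
      a.val ≠ b.val ∧ (rel0 m (a.val + 1) (b.val + 1) ∨ rel0 m (b.val + 1) (a.val + 1)) := by
  simp [Gamma, Fin.val_ne_iff]

theorem adj_iff_spoke {a b : Fin (m + 6)} (ha : a.val < m) (hb : m ≤ b.val) :
    (Gamma m).Adj a b ↔ spoke (a.val % 4) (b.val - m) := by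
  obtain ⟨k, hk, hbk⟩ : ∃ k < 6, b.val = m + k := ⟨b.val - m, by omega, by omega⟩
  rw [adj_iff, hbk, Nat.add_sub_cancel_left]
  unfold rel0 spoke
  interval_cases k <;> grind

theorem adj_iff_outerAdj {a b : Fin (m + 6)} (ha : m ≤ a.val) (hb : m ≤ b.val) :
    (Gamma m).Adj a b ↔ outerAdj (a.val - m) (b.val - m) := by
  obtain ⟨k, hk, hak⟩ : ∃ k < 6, a.val = m + k := ⟨a.val - m, by omega, by omega⟩
  obtain ⟨l, hl, hbl⟩ : ∃ l < 6, b.val = m + l := ⟨b.val - m, by omega, by omega⟩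
  rw [adj_iff, hak, hbl, Nat.add_sub_cancel_left, Nat.add_sub_cancel_left]
  unfold rel0 outerAdj
  interval_cases k <;> interval_cases l <;> grind

theorem adj_of_val_succ {a b : Fin (m + 6)} (hb : b.val < m) (hab : b.val = a.val + 1) :
    (Gamma m).Adj a b :=
  adj_iff.2 ⟨by omega, Or.inl (Or.inl ⟨by omega, by omega, by omega⟩)⟩

theorem adj_of_val_wrap {a b : Fin (m + 6)} (hm : 1 < m) (ha : a.val = 0)
    (hb : b.val + 1 = m) : (Gamma m).Adj a b :=
  adj_iff.2 ⟨by omega, Or.inl (Or.inr (Or.inl ⟨by omega, by omega⟩))⟩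

theorem exists_adj_mod_four (hm : 4 ∣ m) (hm0 : 0 < m) {a : Fin (m + 6)} (ha : a.val < m)
    {r : ℕ} (hr : r = (a.val % 4 + 1) % 4 ∨ r = (a.val % 4 + 3) % 4) :
    ∃ w : Fin (m + 6), w.val < m ∧ w.val % 4 = r ∧ (Gamma m).Adj a w := by
  rcases hr with rfl | rfl
  · by_cases h : a.val + 1 < m
    · exact ⟨⟨a.val + 1, by omega⟩, h, by dsimp only; omega, adj_of_val_succ h rfl⟩
    · exact ⟨⟨0, by omega⟩, hm0, by dsimp only; omega,
        (adj_of_val_wrap (by omega) rfl (by omega)).symm⟩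
  · by_cases h : 0 < a.val
    · exact ⟨⟨a.val - 1, by omega⟩, by dsimp only; omega, by dsimp only; omega,
        (adj_of_val_succ ha (by dsimp only; omega)).symm⟩
    · exact ⟨⟨m - 1, by omega⟩, by dsimp only; omega, by dsimp only; omega,
        adj_of_val_wrap (by omega) (by omega) (by dsimp only; omega)⟩

theorem edist_le_two_of_cycle_cycle {a b : Fin (m + 6)} (ha : a.val < m) (hb : b.val < m) :
    (Gamma m).edist a b ≤ 2 := by
  obtain ⟨k, hk, hak, hbk⟩ := exists_spoke_spoke (a.val % 4) (by omega) (b.val % 4) (by omega)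
  let w : Fin (m + 6) := ⟨m + k, by omega⟩
  have hw : m ≤ w.val := Nat.le_add_right m k
  have hwk : w.val - m = k := Nat.add_sub_cancel_left m _
  refine edist_le_two_of_adj_of_adj ((adj_iff_spoke ha hw).2 ?_)
    ((adj_iff_spoke hb hw).2 ?_).symm <;> rwa [hwk]

theorem edist_le_two_of_cycle_outer (hm : 4 ∣ m) (hm0 : 0 < m) {a b : Fin (m + 6)}
    (ha : a.val < m) (hb : m ≤ b.val) : (Gamma m).edist a b ≤ 2 := by
  rcases spoke_or_spoke_succ_or_spoke_pred (a.val % 4) (by omega) (b.val - m) (by omega)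
    with h | h | h
  · exact (edist_le_one_iff_adj_or_eq.2 (Or.inl ((adj_iff_spoke ha hb).2 h))).trans
      one_le_two
  · obtain ⟨w, hw, hwr, haw⟩ := exists_adj_mod_four hm hm0 ha (Or.inl rfl)
    exact edist_le_two_of_adj_of_adj haw ((adj_iff_spoke hw hb).2 (hwr ▸ h))
  · obtain ⟨w, hw, hwr, haw⟩ := exists_adj_mod_four hm hm0 ha (Or.inr rfl)
    exact edist_le_two_of_adj_of_adj haw ((adj_iff_spoke hw hb).2 (hwr ▸ h))

theorem edist_le_two_of_hub_outer (hm : 4 ∣ m) (hm0 : 0 < m) {a b : Fin (m + 6)}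
    (ha : m ≤ a.val) (ha' : a.val < m + 4) (hb : m ≤ b.val) (hab : a ≠ b) :
    (Gamma m).edist a b ≤ 2 := by
  rcases outerAdj_or_common_of_lt_four (a.val - m) (by omega) (b.val - m) (by omega)
    (by have := Fin.val_ne_of_ne hab; omega) with h | ⟨j, hj, haj, hjb⟩ | ⟨r, hr, har, hrb⟩
  · exact (edist_le_one_iff_adj_or_eq.2 (Or.inl ((adj_iff_outerAdj ha hb).2 h))).trans
      one_le_two
  · let w : Fin (m + 6) := ⟨m + j, by omega⟩
    have hw : m ≤ w.val := Nat.le_add_right m j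
    have hwj : w.val - m = j := Nat.add_sub_cancel_left m _
    refine edist_le_two_of_adj_of_adj ((adj_iff_outerAdj ha hw).2 ?_)
      ((adj_iff_outerAdj hw hb).2 ?_) <;> rwa [hwj]
  · let w : Fin (m + 6) := ⟨r, by omega⟩
    have hw : w.val < m := show r < m by omega
    have hwr : w.val % 4 = r := Nat.mod_eq_of_lt hr
    refine edist_le_two_of_adj_of_adj ((adj_iff_spoke hw ha).2 ?_).symm
      ((adj_iff_spoke hw hb).2 ?_) <;> rwa [hwr]

theorem edist_le_two (hm : 4 ∣ m) (hm0 : 0 < m) {a b : Fin (m + 6)} (ha : a.val < m + 4) :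
    (Gamma m).edist a b ≤ 2 := by
  rcases eq_or_ne a b with rfl | hab
  · simp
  rcases lt_or_ge a.val m with ha' | ha' <;> rcases lt_or_ge b.val m with hb | hb
  · exact edist_le_two_of_cycle_cycle ha' hb
  · exact edist_le_two_of_cycle_outer hm hm0 ha' hb
  · exact edist_comm.trans_le (edist_le_two_of_cycle_outer hm hm0 hb ha')
  · exact edist_le_two_of_hub_outer hm hm0 ha' ha hb hab

theorem edist_apex_apex (hm : 4 ∣ m) (hm0 : 0 < m) {a b : Fin (m + 6)}
    (ha : m + 4 ≤ a.val) (hb : m + 4 ≤ b.val) (hab : a ≠ b) : (Gamma m).edist a b = 3 := by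
  have hab' : a.val - m ≠ b.val - m := by have := Fin.val_ne_of_ne hab; omega
  refine le_antisymm ?_ ?_
  · let c : Fin (m + 6) := ⟨a.val - (m + 4), by omega⟩
    have hc : c.val < m := show a.val - (m + 4) < m by omega
    have hac : (Gamma m).Adj a c :=
      ((adj_iff_spoke hc (by omega)).2 (by unfold spoke; dsimp only [c]; omega)).symm
    calc (Gamma m).edist a b ≤ (Gamma m).edist a c + (Gamma m).edist c b :=
          SimpleGraph.edist_triangle
      _ ≤ 1 + 2 := add_le_add (edist_eq_one_iff_adj.2 hac).le (edist_le_two hm hm0 (by omega))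
      _ = 3 := by norm_num
  · have hnadj : ¬(Gamma m).Adj a b := by
      rw [adj_iff_outerAdj (by omega) (by omega)]
      exact not_outerAdj_of_le (by omega) (by omega)
    have hcommon : (Gamma m).commonNeighbors a b = ∅ := by
      refine Set.eq_empty_iff_forall_notMem.2 fun w hw => hab' ?_
      obtain ⟨haw, hwb⟩ := (mem_commonNeighbors (G := Gamma m)).1 hw
      rcases lt_or_ge w.val m with hw | hw
      · exact eq_of_spoke_of_spoke (by omega) (by omega) (by omega) (by omega)
          ((adj_iff_spoke hw (by omega)).1 haw.symm) ((adj_iff_spoke hw (by omega)).1 hwb.symm)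
      · exact eq_of_outerAdj_of_outerAdj (by omega) (by omega)
          ((adj_iff_outerAdj (by omega) hw).1 haw) ((adj_iff_outerAdj hw (by omega)).1 hwb.symm)
    exact Order.add_one_le_of_lt (two_lt_edist_iff.2 ⟨hab, hnadj, hcommon⟩)

theorem eccent_le_two (hm : 4 ∣ m) (hm0 : 0 < m) {v : Fin (m + 6)} (hv : v.val < m + 4) :
    (Gamma m).eccent v ≤ 2 :=
  (eccent_le_iff v 2).2 fun _ => edist_le_two hm hm0 hv

theorem eccent_apex (hm : 4 ∣ m) (hm0 : 0 < m) {v : Fin (m + 6)} (hv : m + 4 ≤ v.val) :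
    (Gamma m).eccent v = 3 := by
  refine le_antisymm ((eccent_le_iff v 3).2 fun u => ?_) ?_
  · rcases lt_or_ge u.val (m + 4) with hu | hu
    · exact edist_comm.trans_le ((edist_le_two hm hm0 hu).trans (by norm_num))
    rcases eq_or_ne v u with rfl | hvu
    · simp
    · exact (edist_apex_apex hm hm0 hv hu hvu).le
  · let v' : Fin (m + 6) := ⟨2 * m + 9 - v.val, by omega⟩
    have hv' : m + 4 ≤ v'.val := show m + 4 ≤ 2 * m + 9 - v.val by omega
    have hvv' : v ≠ v' := Fin.ne_of_val_ne (show v.val ≠ 2 * m + 9 - v.val by omega)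
    exact (edist_apex_apex hm hm0 hv hv' hvv').symm.trans_le edist_le_eccent

end Gamma

theorem ecc_eq_three_iff {m : ℕ} (hm : 4 ∣ m) (hm0 : 0 < m) (v : Fin (m + 6)) :
    ecc m v = 3 ↔ m + 4 ≤ v.val := by
  refine ⟨fun h => ?_, Gamma.eccent_apex hm hm0⟩
  by_contra! hv
  exact absurd (h.symm.trans_le (Gamma.eccent_le_two hm hm0 hv)) (by norm_num)

/-- `m+5` and `m+6` are exactly the vertices of eccentricity `3`
    in `Γ_m`; all others have eccentricity at most `2`; consequently every
    automorphism permutes `{m+5, m+6}`. -/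
theorem stmt6 (n m : ℕ) (hn : 2 ≤ n) (hm : m = 2 ^ n) :
    (∀ v : Fin (m + 6), ecc m v = 3 ↔ m + 4 ≤ v.val) ∧
    (∀ v : Fin (m + 6), v.val < m + 4 → ecc m v ≤ 2) ∧
    (∀ f : Gamma m ≃g Gamma m, ∀ v : Fin (m + 6),
      m + 4 ≤ v.val → m + 4 ≤ (f v).val) := by
  have h4 : 4 ∣ m := hm ▸ pow_dvd_pow 2 hn
  have h0 : 0 < m := hm ▸ Nat.two_pow_pos n
  refine ⟨ecc_eq_three_iff h4 h0, fun v hv => Gamma.eccent_le_two h4 h0 hv, fun f v hv => ?_⟩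
  rw [← ecc_eq_three_iff h4 h0] at hv ⊢
  exact (f.eccent_eq v).trans hv
end

section
/- For every natural number n ≥ 2 there exists a finite simple undirected graph Γ on 2^n + 6 vertices whose full automorphism group is isomorphic to the cyclic group ℤ/2^n ℤ. -/
/-!
Number the vertices of the `m`-cycle of `Γ_m` by `a ∈ ℤ/m` (label `a + 1`). The remaining six are
`X_r` (`r ∈ ℤ/4`), adjacent to the cycle vertices `a ≡ r, r + 1 (mod 4)`, and `P_t` (`t ∈ ℤ/2`),
adjacent to those with `a ≡ t (mod 2)` and to `X_t`, `X_{t+2}`. So the vertex set is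
`ℤ/m ⊕ ℤ/4 ⊕ ℤ/2`, and as `4 ∣ m`, translating all three summands by `k` is an automorphism; this
gives an injective homomorphism `ℤ/m → Aut Γ_m`.

It is onto. The degrees `5`, `m/2 + 1`, `m/2 + 2` of cycle vertices, `X`'s and `P`'s, together with
(for `m = 8`) the number of common neighbours of `X_r` and `P_{r mod 2}`, which is `m/4` against `1`
for a cycle vertex and its `P`, show that automorphisms preserve the three kinds of vertices. An
automorphism fixing the cycle vertex `0` cannot reverse the cycle: `X_0` is adjacent to `0`, `1`
and `P_0`, whereas the only `X` adjacent to `0` and `-1` is `X_3`, which is not adjacent to `P_0`.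
So it fixes the cycle pointwise, and then also each `X_r` and `P_t`, since these have distinct
neighbourhoods on the cycle.
-/

open Finset Sum

namespace ZMod

lemma natCast_ne_zero_of_lt {m n : ℕ} (hn : 0 < n) (h : n < m) : (n : ZMod m) ≠ 0 := by
  rw [Ne, natCast_eq_zero_iff]
  exact Nat.not_dvd_of_pos_of_lt hn h

lemma cast_cast_of_dvd {m e d : ℕ} (hde : d ∣ e) (hem : e ∣ m) (a : ZMod m) :
    ((a.cast : ZMod e).cast : ZMod d) = a.cast :=
  RingHom.congr_fun (castHom_comp hde hem) a

variable {m d : ℕ} [NeZero m] [NeZero d]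

lemma eq_add_one_iff_val (a b : ZMod m) :
    b = a + 1 ↔ b.val = a.val + 1 ∨ (a.val + 1 = m ∧ b.val = 0) := by
  have ha := val_lt a
  have hb := val_lt b
  have key : b = a + 1 ↔ b.val % m = (a.val + 1) % m := by
    rw [← natCast_eq_natCast_iff', Nat.cast_succ, natCast_zmod_val, natCast_zmod_val]
  rw [key, Nat.mod_eq_of_lt hb]
  rcases (Nat.succ_le_of_lt ha).lt_or_eq with h | h
  · rw [Nat.mod_eq_of_lt h]; omega
  · rw [show a.val + 1 = m from h, Nat.mod_self]; omega

lemma cast_eq_iff_val (a : ZMod m) (r : ZMod d) : (a.cast : ZMod d) = r ↔ a.val % d = r.val := by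
  rw [cast_eq_val, ← natCast_zmod_val r, natCast_eq_natCast_iff', val_natCast,
    Nat.mod_eq_of_lt (val_lt r)]

lemma cast_eq_add_one_iff_val (a : ZMod m) (r : ZMod d) :
    (a.cast : ZMod d) = r + 1 ↔ a.val % d = (r.val + 1) % d := by
  rw [cast_eq_val, ← natCast_zmod_val r, ← Nat.cast_succ, natCast_eq_natCast_iff', val_natCast,
    Nat.mod_eq_of_lt (val_lt r)]

lemma card_filter_cast_eq (h : d ∣ m) (r : ZMod d) :
    #{a : ZMod m | (a.cast : ZMod d) = r} = m / d := by
  let f := (castHom h (ZMod d)).toAddMonoidHom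
  have hf (s : ZMod d) : #{a : ZMod m | f a = s} = #{a : ZMod m | f a = r} :=
    AddMonoidHom.card_fiber_eq_of_mem_range f (castHom_surjective h s) (castHom_surjective h r)
  have hsum := card_eq_sum_card_fiberwise (s := univ) (t := univ) (fun a _ => mem_univ (f a))
  simp only [card_univ, ZMod.card, hf, sum_const, smul_eq_mul] at hsum
  exact (Nat.div_eq_of_eq_mul_right (NeZero.pos d) hsum).symm

end ZMod

lemma Finset.card_filter_univ_sum {α β : Type*} [Fintype α] [Fintype β] (p : α ⊕ β → Prop)
    [DecidablePred p] : #{x | p x} = #{a | p (inl a)} + #{b | p (inr b)} := by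
  rw [← card_toLeft_add_card_toRight]
  congr 2 <;> ext <;> simp

namespace SimpleGraph.Iso

variable {V W : Type*} {G : SimpleGraph V} {G' : SimpleGraph W}

def autCongr (e : G ≃g G') : (G ≃g G) ≃* (G' ≃g G') where
  toFun φ := (e.symm.trans φ).trans e
  invFun ψ := (e.trans ψ).trans e.symm
  left_inv φ := by ext; simp
  right_inv ψ := by ext; simp
  map_mul' φ ψ := by ext; simp [RelIso.mul_apply]

lemma card_neighborFinset_inter [Fintype V] [Fintype W] [DecidableEq V] [DecidableEq W]
    [DecidableRel G.Adj] [DecidableRel G'.Adj] (φ : G ≃g G') (v w : V) :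
    #(G'.neighborFinset (φ v) ∩ G'.neighborFinset (φ w)) =
      #(G.neighborFinset v ∩ G.neighborFinset w) := by
  rw [← card_map φ.toEquiv.toEmbedding]
  congr 1
  ext x
  obtain ⟨y, rfl⟩ := φ.surjective x
  rw [mem_map_equiv, show φ.toEquiv.symm (φ y) = y from φ.toEquiv.symm_apply_apply y]
  simp only [mem_inter, mem_neighborFinset, φ.map_adj_iff]

end SimpleGraph.Iso

section rel0

variable {m i j r t : ℕ}

lemma rel0_cyc (hi : i < m) :
    rel0 m (i + 1) (j + 1) ↔ (j = i + 1 ∧ j < m) ∨ (i = 0 ∧ j + 1 = m) := by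
  constructor
  · rintro (h | h | h | h | h | h | h | h | h | h | h | h) <;> omega
  · rintro (h | h)
    · exact .inl ⟨by omega, by omega, by omega⟩
    · exact .inr <| .inl ⟨by omega, by omega⟩

lemma rel0_hub (hr : r < 4) :
    rel0 m (m + r + 1) (j + 1) ↔
      (j < m ∧ (j % 4 = r ∨ j % 4 = (r + 1) % 4)) ∨ j = m + 4 + r % 2 := by
  constructor
  · rintro (h | h | h | h | h | h | h | h | h | h | h | h) <;> omega
  · obtain rfl | rfl | rfl | rfl : r = 0 ∨ r = 1 ∨ r = 2 ∨ r = 3 := by omega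
    · rintro (h | h)
      · exact .inr <| .inr <| .inl ⟨by omega, by omega, by omega, by omega⟩
      · exact .inr <| .inr <| .inr <| .inr <| .inr <| .inr <| .inr <| .inr <| .inl
          ⟨by omega, by omega⟩
    · rintro (h | h)
      · exact .inr <| .inr <| .inr <| .inl ⟨by omega, by omega, by omega, by omega⟩
      · exact .inr <| .inr <| .inr <| .inr <| .inr <| .inr <| .inr <| .inr <| .inr <| .inr <| .inl
          ⟨by omega, by omega⟩
    · rintro (h | h)
      · exact .inr <| .inr <| .inr <| .inr <| .inl ⟨by omega, by omega, by omega, by omega⟩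
      · exact .inr <| .inr <| .inr <| .inr <| .inr <| .inr <| .inr <| .inr <| .inr <| .inl
          ⟨by omega, by omega⟩
    · rintro (h | h)
      · exact .inr <| .inr <| .inr <| .inr <| .inr <| .inl ⟨by omega, by omega, by omega, by omega⟩
      · exact .inr <| .inr <| .inr <| .inr <| .inr <| .inr <| .inr <| .inr <| .inr <| .inr <| .inr
          ⟨by omega, by omega⟩

lemma rel0_par (ht : t < 2) :
    rel0 m (m + 4 + t + 1) (j + 1) ↔ j < m ∧ j % 2 = t := by
  constructor
  · rintro (h | h | h | h | h | h | h | h | h | h | h | h) <;> omega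
  · obtain rfl | rfl : t = 0 ∨ t = 1 := by omega
    · exact fun h => .inr <| .inr <| .inr <| .inr <| .inr <| .inr <| .inl
        ⟨by omega, by omega, by omega, by omega⟩
    · exact fun h => .inr <| .inr <| .inr <| .inr <| .inr <| .inr <| .inr <| .inl
        ⟨by omega, by omega, by omega, by omega⟩

end rel0

namespace Gamma

-- `cyc a`, `hub r`, `par t` are the cycle vertex `a`, `X_r` and `P_t`; `index` sends them to the
-- vertices of `Gamma m` with labels `a + 1`, `m + r + 1` and `m + t + 5`.
local notation "cyc " a:max => Sum.inl a
local notation "hub " r:max => Sum.inr (Sum.inl r)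
local notation "par " t:max => Sum.inr (Sum.inr t)

variable {m : ℕ}

def link : ZMod m ⊕ ZMod 4 ⊕ ZMod 2 → ZMod m ⊕ ZMod 4 ⊕ ZMod 2 → Prop
  | cyc a, cyc b => b = a + 1
  | cyc a, hub r => a.cast = r ∨ a.cast = r + 1
  | cyc a, par t => a.cast = t
  | hub r, par t => r.cast = t
  | _, _ => False

instance : DecidableRel (link (m := m)) := fun u v => by
  rcases u with a | r | t <;> rcases v with b | s | w <;> unfold link <;> infer_instance

variable (m) in
def model : SimpleGraph (ZMod m ⊕ ZMod 4 ⊕ ZMod 2) := SimpleGraph.fromRel link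

instance : DecidableRel (model m).Adj := fun u v =>
  inferInstanceAs (Decidable (u ≠ v ∧ (link u v ∨ link v u)))

section Adj

variable {a b : ZMod m} {r s : ZMod 4} {t w : ZMod 2}

@[simp] lemma adj_cyc_cyc : (model m).Adj (cyc a) (cyc b) ↔ a ≠ b ∧ (b = a + 1 ∨ a = b + 1) := by
  simp [model, link]
@[simp] lemma adj_cyc_hub : (model m).Adj (cyc a) (hub r) ↔ a.cast = r ∨ a.cast = r + 1 := by
  simp [model, link]
@[simp] lemma adj_hub_cyc : (model m).Adj (hub r) (cyc a) ↔ a.cast = r ∨ a.cast = r + 1 := by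
  simp [model, link]
@[simp] lemma adj_cyc_par : (model m).Adj (cyc a) (par t) ↔ a.cast = t := by simp [model, link]
@[simp] lemma adj_par_cyc : (model m).Adj (par t) (cyc a) ↔ a.cast = t := by simp [model, link]
@[simp] lemma adj_hub_par : (model m).Adj (hub r) (par t) ↔ r.cast = t := by simp [model, link]
@[simp] lemma adj_par_hub : (model m).Adj (par t) (hub r) ↔ r.cast = t := by simp [model, link]
@[simp] lemma not_adj_hub_hub : ¬ (model m).Adj (hub r) (hub s) := by simp [model, link]
@[simp] lemma not_adj_par_par : ¬ (model m).Adj (par t) (par w) := by simp [model, link]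

end Adj

section Index

variable [NeZero m]

def index : ZMod m ⊕ ZMod 4 ⊕ ZMod 2 → Fin (m + 6)
  | cyc a => ⟨a.val, by have := a.val_lt; omega⟩
  | hub r => ⟨m + r.val, by have := r.val_lt; omega⟩
  | par t => ⟨m + 4 + t.val, by have := t.val_lt; omega⟩

lemma index_injective : Function.Injective (index (m := m)) := by
  rintro (a | r | t) (b | s | u) h <;> simp only [index, Fin.mk.injEq] at h <;>
    grind [ZMod.val_lt, ZMod.val_injective]

lemma rel0_index_iff (u v : ZMod m ⊕ ZMod 4 ⊕ ZMod 2) :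
    rel0 m ((index u).val + 1) ((index v).val + 1) ∨
        rel0 m ((index v).val + 1) ((index u).val + 1) ↔ link u v ∨ link v u := by
  rcases u with a | r | t <;> rcases v with b | s | w <;>
    simp only [index, link, ZMod.cast_eq_add_one_iff_val, or_false, false_or]
  · have := a.val_lt; have := b.val_lt
    rw [rel0_cyc a.val_lt, rel0_cyc b.val_lt, ZMod.eq_add_one_iff_val,
      ZMod.eq_add_one_iff_val]
    omega
  · have := a.val_lt; have := s.val_lt
    rw [rel0_cyc a.val_lt, rel0_hub s.val_lt, ZMod.cast_eq_iff_val]; omega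
  · have := a.val_lt; have := w.val_lt
    rw [rel0_cyc a.val_lt, rel0_par w.val_lt, ZMod.cast_eq_iff_val]; omega
  · have := r.val_lt; have := b.val_lt
    rw [rel0_cyc b.val_lt, rel0_hub r.val_lt, ZMod.cast_eq_iff_val]; omega
  · have := r.val_lt; have := s.val_lt
    rw [rel0_hub s.val_lt, rel0_hub r.val_lt, iff_false]; omega
  · have := r.val_lt; have := w.val_lt
    rw [rel0_hub r.val_lt, rel0_par w.val_lt, ZMod.cast_eq_iff_val]; omega
  · have := t.val_lt; have := b.val_lt
    rw [rel0_cyc b.val_lt, rel0_par t.val_lt, ZMod.cast_eq_iff_val]; omega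
  · have := t.val_lt; have := s.val_lt
    rw [rel0_hub s.val_lt, rel0_par t.val_lt, ZMod.cast_eq_iff_val]; omega
  · have := t.val_lt; have := w.val_lt
    rw [rel0_par t.val_lt, rel0_par w.val_lt, iff_false]; omega

variable (m) in
noncomputable def modelIso : model m ≃g Gamma m where
  toEquiv := Equiv.ofBijective index
    ((Fintype.bijective_iff_injective_and_card _).2 ⟨index_injective, by simp⟩)
  map_rel_iff' {u v} :=
    (and_congr index_injective.ne_iff (rel0_index_iff u v)).trans (SimpleGraph.fromRel_adj ..).symm

end Index

section Shift

variable (h4 : 4 ∣ m)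
include h4

def shift : Multiplicative (ZMod m) →* (model m ≃g model m) where
  toFun k :=
    { toEquiv := Equiv.sumCongr (Equiv.addRight k.toAdd)
        (Equiv.sumCongr (Equiv.addRight k.toAdd.cast) (Equiv.addRight k.toAdd.cast))
      map_rel_iff' {u v} := by
        have h2 : 2 ∣ m := dvd_trans (by norm_num) h4
        rcases u with a | r | t <;> rcases v with b | s | w <;>
          simp [ZMod.cast_add h4, ZMod.cast_add h2, ZMod.cast_add (by norm_num : 2 ∣ 4),
            ZMod.cast_cast_of_dvd (by norm_num : 2 ∣ 4) h4, add_right_comm _ _ (1 : ZMod m),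
            add_right_comm _ _ (1 : ZMod 4)] }
  map_one' := by ext (a | r | t) <;> simp
  map_mul' k l := by
    have h2 : 2 ∣ m := dvd_trans (by norm_num) h4
    ext (a | r | t) <;> simp [ZMod.cast_add h4, ZMod.cast_add h2] <;> ring

@[simp] lemma shift_apply_cyc (k : Multiplicative (ZMod m)) (a : ZMod m) :
    shift h4 k (cyc a) = cyc (a + k.toAdd) := rfl

end Shift

variable [NeZero m] (h4 : 4 ∣ m)
include h4

lemma zmod_one_ne_zero : (1 : ZMod m) ≠ 0 := by
  have := Nat.le_of_dvd (NeZero.pos m) h4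
  exact_mod_cast ZMod.natCast_ne_zero_of_lt one_pos (by omega)

lemma zmod_two_ne_zero : (2 : ZMod m) ≠ 0 := by
  have := Nat.le_of_dvd (NeZero.pos m) h4
  exact_mod_cast ZMod.natCast_ne_zero_of_lt two_pos (by omega)

lemma degree_cyc (a : ZMod m) : (model m).degree (cyc a) = 5 := by
  have h1 := zmod_one_ne_zero h4
  have h2 := zmod_two_ne_zero h4
  have hcyc : #{b | a ≠ b ∧ (b = a + 1 ∨ a = b + 1)} = 2 := by
    rw [card_eq_two]
    refine ⟨a + 1, a - 1, fun h => h2 (by linear_combination h), ?_⟩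
    ext b
    simp only [mem_filter, mem_univ, true_and, mem_insert, mem_singleton]
    constructor
    · rintro ⟨-, rfl | rfl⟩
      · exact .inl rfl
      · exact .inr (by ring)
    · rintro (rfl | rfl)
      · exact ⟨fun h => h1 (by linear_combination -h), .inl rfl⟩
      · exact ⟨fun h => h1 (by linear_combination h), .inr (by ring)⟩
  have hhub : ∀ s : ZMod 4, #{r | s = r ∨ s = r + 1} = 2 := by decide
  rw [← SimpleGraph.card_neighborFinset_eq_degree, SimpleGraph.neighborFinset_eq_filter,
    card_filter_univ_sum, card_filter_univ_sum]
  simp only [adj_cyc_cyc, adj_cyc_hub, adj_cyc_par, hcyc, hhub, filter_eq, mem_univ, if_true,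
    card_singleton]

lemma degree_hub (r : ZMod 4) : (model m).degree (hub r) = 2 * (m / 4) + 1 := by
  have hdisj : Disjoint (univ.filter fun a : ZMod m => a.cast = r)
      (univ.filter fun a => a.cast = r + 1) :=
    disjoint_filter.2 fun _ _ h h' =>
      (by decide : ∀ s : ZMod 4, s ≠ s + 1) r (h.symm.trans h')
  rw [← SimpleGraph.card_neighborFinset_eq_degree, SimpleGraph.neighborFinset_eq_filter,
    card_filter_univ_sum, card_filter_univ_sum]
  simp only [adj_hub_cyc, not_adj_hub_hub, adj_hub_par, filter_false, card_empty, filter_eq,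
    mem_univ, if_true, card_singleton, filter_or, card_union_of_disjoint hdisj,
    ZMod.card_filter_cast_eq h4]
  ring

lemma degree_par (t : ZMod 2) : (model m).degree (par t) = m / 2 + 2 := by
  have hpar : ∀ t : ZMod 2, #{r : ZMod 4 | r.cast = t} = 2 := by decide
  rw [← SimpleGraph.card_neighborFinset_eq_degree, SimpleGraph.neighborFinset_eq_filter,
    card_filter_univ_sum, card_filter_univ_sum]
  simp only [adj_par_cyc, adj_par_hub, not_adj_par_par, filter_false, card_empty, add_zero, hpar,
    ZMod.card_filter_cast_eq (dvd_trans (by norm_num : 2 ∣ 4) h4)]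

lemma card_common_hub_par (r : ZMod 4) :
    #((model m).neighborFinset (hub r) ∩ (model m).neighborFinset (par r.cast)) = m / 4 := by
  have key : ∀ s r : ZMod 4, ((s = r ∨ s = r + 1) ∧ s.cast = (r.cast : ZMod 2)) ↔ s = r := by
    decide
  rw [SimpleGraph.neighborFinset_eq_filter, SimpleGraph.neighborFinset_eq_filter, ← filter_and,
    card_filter_univ_sum, card_filter_univ_sum]
  simp only [adj_hub_cyc, adj_par_cyc, not_adj_hub_hub, not_adj_par_par, false_and, and_false,
    filter_false, card_empty, add_zero, ← ZMod.cast_cast_of_dvd (by norm_num : 2 ∣ 4) h4, key,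
    ZMod.card_filter_cast_eq h4]

lemma card_common_cyc_par (a : ZMod m) :
    #((model m).neighborFinset (cyc a) ∩ (model m).neighborFinset (par a.cast)) = 1 := by
  have h2 : 2 ∣ m := dvd_trans (by norm_num) h4
  have key : ∀ s r : ZMod 4, ((s = r ∨ s = r + 1) ∧ r.cast = (s.cast : ZMod 2)) ↔ r = s := by
    decide
  have hcyc (b : ZMod m) :
      ¬ ((a ≠ b ∧ (b = a + 1 ∨ a = b + 1)) ∧ b.cast = (a.cast : ZMod 2)) := by
    have hne : ∀ x : ZMod 2, x ≠ x + 1 := by decide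
    rintro ⟨⟨-, rfl | rfl⟩, h⟩ <;> rw [ZMod.cast_add h2, ZMod.cast_one h2] at h
    exacts [hne _ h.symm, hne _ h]
  rw [SimpleGraph.neighborFinset_eq_filter, SimpleGraph.neighborFinset_eq_filter, ← filter_and,
    card_filter_univ_sum, card_filter_univ_sum]
  simp only [adj_cyc_cyc, adj_par_cyc, adj_cyc_hub, adj_par_hub, adj_cyc_par, not_adj_par_par,
    and_false, filter_false, card_empty, add_zero]
  rw [filter_false_of_mem fun b _ => hcyc b]
  simp only [← ZMod.cast_cast_of_dvd (by norm_num : 2 ∣ 4) h4, key, filter_eq', mem_univ, if_true,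
    card_singleton, card_empty]

section Automorphism

variable (ψ : model m ≃g model m)

lemma exists_apply_par (t : ZMod 2) : ∃ t', ψ (par t) = par t' := by
  have hdeg := ψ.degree_eq (par t)
  rw [degree_par h4] at hdeg
  rcases hx : ψ (par t) with a | r | t'
  · rw [hx, degree_cyc h4] at hdeg; omega
  · rw [hx, degree_hub h4] at hdeg; omega
  · exact ⟨t', rfl⟩

lemma exists_apply_hub (r : ZMod 4) : ∃ r', ψ (hub r) = hub r' := by
  rcases hx : ψ (hub r) with a | r' | t
  · obtain ⟨t, ht⟩ := exists_apply_par h4 ψ r.cast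
    have hadj := ψ.map_adj_iff.2 (adj_hub_par.2 rfl : (model m).Adj (hub r) (par r.cast))
    rw [hx, ht, adj_cyc_par] at hadj
    have hcommon := ψ.card_neighborFinset_inter (hub r) (par r.cast)
    rw [hx, ht, ← hadj, card_common_cyc_par h4, card_common_hub_par h4] at hcommon
    have hdeg := ψ.degree_eq (hub r)
    rw [hx, degree_cyc h4, degree_hub h4] at hdeg
    omega
  · exact ⟨r', rfl⟩
  · obtain ⟨t', ht'⟩ := exists_apply_par h4 ψ.symm t
    rw [← hx, ψ.symm_apply_apply] at ht'
    cases ht'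

lemma exists_apply_cyc (a : ZMod m) : ∃ b, ψ (cyc a) = cyc b := by
  rcases hx : ψ (cyc a) with b | r | t
  · exact ⟨b, rfl⟩
  · obtain ⟨r', hr'⟩ := exists_apply_hub h4 ψ.symm r
    rw [← hx, ψ.symm_apply_apply] at hr'
    cases hr'
  · obtain ⟨t', ht'⟩ := exists_apply_par h4 ψ.symm t
    rw [← hx, ψ.symm_apply_apply] at ht'
    cases ht'

lemma apply_cyc_one (hψ : ψ (cyc 0) = cyc 0) : ψ (cyc 1) = cyc 1 := by
  obtain ⟨c, hc⟩ := exists_apply_cyc h4 ψ 1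
  have h01 := ψ.map_adj_iff.2 (adj_cyc_cyc.2 ⟨(zmod_one_ne_zero h4).symm, .inl (zero_add 1).symm⟩)
  rw [hψ, hc, adj_cyc_cyc, zero_add] at h01
  obtain ⟨-, rfl | hc'⟩ := h01
  · exact hc
  obtain ⟨r, hr⟩ := exists_apply_hub h4 ψ 0
  obtain ⟨t, ht⟩ := exists_apply_par h4 ψ 0
  have e1 := ψ.map_adj_iff.2
    (adj_hub_cyc.2 (.inl ZMod.cast_zero) : (model m).Adj (hub 0) (cyc 0))
  have e2 := ψ.map_adj_iff.2
    (adj_hub_cyc.2 (.inr (by rw [ZMod.cast_one h4, zero_add])) : (model m).Adj (hub 0) (cyc 1))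
  have e3 := ψ.map_adj_iff.2 (adj_par_cyc.2 ZMod.cast_zero : (model m).Adj (par 0) (cyc 0))
  have e4 := ψ.map_adj_iff.2 (adj_hub_par.2 ZMod.cast_zero : (model m).Adj (hub 0) (par 0))
  rw [hr, hψ, adj_hub_cyc, ZMod.cast_zero] at e1
  rw [hr, hc, adj_hub_cyc, eq_neg_of_add_eq_zero_left hc'.symm, ZMod.cast_neg h4,
    ZMod.cast_one h4] at e2
  rw [ht, hψ, adj_par_cyc, ZMod.cast_zero] at e3
  rw [hr, ht, adj_hub_par, ← e3] at e4
  exact absurd e4 ((by decide : ∀ r : ZMod 4, (0 = r ∨ 0 = r + 1) → (-1 = r ∨ -1 = r + 1) →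
    (r.cast : ZMod 2) ≠ 0) r e1 e2)

lemma apply_cyc_add_two {x : ZMod m} (h0 : ψ (cyc x) = cyc x)
    (h1 : ψ (cyc (x + 1)) = cyc (x + 1)) : ψ (cyc (x + 2)) = cyc (x + 2) := by
  obtain ⟨c, hc⟩ := exists_apply_cyc h4 ψ (x + 2)
  have hadj := ψ.map_adj_iff.2 (adj_cyc_cyc.2
    ⟨fun h => zmod_one_ne_zero h4 (by linear_combination -h), .inl (by ring)⟩ :
      (model m).Adj (cyc (x + 1)) (cyc (x + 2)))
  rw [h1, hc, adj_cyc_cyc] at hadj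
  obtain ⟨-, rfl | hcx⟩ := hadj
  · rw [hc]; ring_nf
  · have := ψ.injective (hc.trans (by rw [← add_right_cancel hcx, h0]))
    exact absurd (by simpa using this) (zmod_two_ne_zero h4)

lemma apply_cyc_natCast (hψ : ψ (cyc 0) = cyc 0) (n : ℕ) :
    ψ (cyc (n : ZMod m)) = cyc (n : ZMod m) := by
  suffices ψ (cyc (n : ZMod m)) = cyc (n : ZMod m) ∧
      ψ (cyc (n + 1 : ZMod m)) = cyc (n + 1 : ZMod m) from this.1
  induction n with
  | zero => simpa using ⟨hψ, apply_cyc_one h4 ψ hψ⟩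
  | succ n ih =>
    refine ⟨by exact_mod_cast ih.2, ?_⟩
    push_cast
    rw [add_assoc, one_add_one_eq_two]
    exact apply_cyc_add_two h4 ψ ih.1 ih.2

lemma eq_one_of_apply_cyc_zero (hψ : ψ (cyc 0) = cyc 0) : ψ = 1 := by
  have hcyc (a : ZMod m) : ψ (cyc a) = cyc a := by
    simpa only [ZMod.natCast_zmod_val] using apply_cyc_natCast h4 ψ hψ a.val
  have hadj (u : ZMod m ⊕ ZMod 4 ⊕ ZMod 2) (a : ZMod m) :
      (model m).Adj (ψ u) (cyc a) ↔ (model m).Adj u (cyc a) := by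
    simpa only [hcyc] using ψ.map_adj_iff (v := u) (w := cyc a)
  ext (a | r | t)
  · exact hcyc a
  · obtain ⟨r', hr'⟩ := exists_apply_hub h4 ψ r
    have key (s : ZMod 4) : (s = r' ∨ s = r' + 1) ↔ (s = r ∨ s = r + 1) := by
      obtain ⟨a, rfl⟩ := ZMod.castHom_surjective h4 s
      simpa [hr'] using hadj (hub r) a
    rw [hr', (by decide : ∀ r r' : ZMod 4,
      (∀ s : ZMod 4, (s = r' ∨ s = r' + 1) ↔ (s = r ∨ s = r + 1)) → r' = r) r r' key]
    rfl
  · obtain ⟨t', ht'⟩ := exists_apply_par h4 ψ t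
    have key (s : ZMod 2) : s = t' ↔ s = t := by
      obtain ⟨a, rfl⟩ := ZMod.castHom_surjective (dvd_trans (by norm_num : 2 ∣ 4) h4) s
      simpa [ht'] using hadj (par t) a
    rw [ht', (key t').1 rfl]
    rfl

end Automorphism

lemma shift_bijective : Function.Bijective (shift h4) := by
  refine ⟨fun k l hkl => ?_, fun ψ => ?_⟩
  · simpa using congr($hkl (cyc 0))
  · obtain ⟨k, hk⟩ := exists_apply_cyc h4 ψ 0
    refine ⟨Multiplicative.ofAdd k, ?_⟩
    have := eq_one_of_apply_cyc_zero h4 (shift h4 (Multiplicative.ofAdd (-k)) * ψ)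
      (by rw [RelIso.mul_apply, hk, shift_apply_cyc, toAdd_ofAdd, add_neg_cancel])
    rw [eq_inv_of_mul_eq_one_right this, ← map_inv, ofAdd_neg, inv_inv]

noncomputable def autEquiv : (Gamma m ≃g Gamma m) ≃* Multiplicative (ZMod m) :=
  (modelIso m).symm.autCongr.trans (MulEquiv.ofBijective _ (shift_bijective h4)).symm

end Gamma

/-- for every `n ≥ 2` there is a graph on `2^n + 6` vertices whose
    full automorphism group is isomorphic to `ℤ/2^n ℤ`. -/
theorem stmt8 (n : ℕ) (hn : 2 ≤ n) :
    ∃ Γ : SimpleGraph (Fin (2 ^ n + 6)),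
      Nonempty ((Γ ≃g Γ) ≃* Multiplicative (ZMod (2 ^ n))) :=
  ⟨Gamma (2 ^ n), ⟨Gamma.autEquiv (Nat.pow_dvd_pow 2 hn)⟩⟩
end
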